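/- Let n be a positive integer and alpha > 0 satisfy alpha * 2^{-n} * C(n,i) <= 1 for all i in {0,...,n}. Let P be the product distribution on {0,1}^{n+1} in which bit i (for i in {0,...,n}) equals 1 independently with probability S_e(i). Then the sum over all x in {0,1}^{n+1} of sqrt(P(x)) is at most e^{ sqrt(alpha) * (2*pi*n)^{1/4} }. By symmetry the same bound holds with S_e replaced by S_o. -/

import Mathlib

/-- The binomial probability `bin n p k = C(n,k) p^k (1-p)^(n-k)` (here `C(n,k) = 0`
for `k > n`, so the value is `0` out of range). -/
noncomputable def bin (n : ℕ) (p : ℝ) (k : ℕ) : ℝ :=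
  (n.choose k : ℝ) * p^k * (1-p)^(n-k)

/-- The length-`(n+1)` string of probabilities `S_e`, nonzero on even indices:
`S_e(i) = α bin(n,1/2,i)` for even `i`, and `0` for odd `i`. -/
noncomputable def Se (n : ℕ) (α : ℝ) : Fin (n+1) → ℝ :=
  fun i => if Even i.val then α * bin n (1/2) i.val else 0

/-- The length-`(n+1)` string of probabilities `S_o`, nonzero on odd indices:
`S_o(i) = α bin(n,1/2,i)` for odd `i`, and `0` for even `i`. -/
noncomputable def So (n : ℕ) (α : ℝ) : Fin (n+1) → ℝ :=
  fun i => if Even i.val then 0 else α * bin n (1/2) i.val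

/-- The probability assigned to the binary string `x : Fin m → Bool` by the product
distribution in which bit `i` equals `1` independently with probability `S i`. -/
noncomputable def prodP {m : ℕ} (S : Fin m → ℝ) (x : Fin m → Bool) : ℝ :=
  ∏ i, if x i then S i else 1 - S i

/-! The sum factorises over the coordinates: `∑ₓ √P(x) = ∏ᵢ (√Sᵢ + √(1 - Sᵢ)) ≤ exp (∑ᵢ √Sᵢ)`,
so it suffices to bound `∑ √bin(n,1/2,i)` over one parity class of `i` by `(2πn)^{1/4}`.
By Cauchy–Schwarz with weights `wᵢ = 1 + (2i - n)²/n`, the square of that sum is at most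
`(∑ bin·w) (∑ 1/w)`. The first factor is `2`, since the binomial variance is `n/4`. Along a
parity class the second one is a lattice sum of the Cauchy kernel `1/(1 + y²/a²)` with
`a = √n/4`, at most `2 + πa` by comparison with its integral. The square is therefore at most
`4 + π√n/2 ≤ √(2πn)` once `n ≥ 20`; for smaller `n` unweighted Cauchy–Schwarz over the
`n/2 + 1` indices of the class suffices. -/

open Finset Real

lemma sum_range_bin (n : ℕ) (p : ℝ) : ∑ k ∈ range (n + 1), bin n p k = 1 := by
  have := (add_pow p (1 - p) n).symm
  rw [add_sub_cancel, one_pow] at this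
  rw [← this]
  exact sum_congr rfl fun k _ => by unfold bin; ring

lemma bin_half (n k : ℕ) : bin n (1 / 2) k = n.choose k / 2 ^ n := by
  rcases le_or_gt k n with hk | hk
  · rw [bin, show (1 : ℝ) - 1 / 2 = 1 / 2 by norm_num, mul_assoc, ← pow_add,
      Nat.add_sub_cancel' hk, one_div_pow, mul_one_div]
  · simp [bin, Nat.choose_eq_zero_of_lt hk]

lemma sum_range_choose_mul_two_mul_sub_sq (n : ℕ) :
    ∑ i ∈ range (n + 1), (n.choose i : ℝ) * (2 * i - n) ^ 2 = (n : ℝ) * 2 ^ n := by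
  induction n with
  | zero => simp
  | succ n ih =>
    have hsplit := Finset.sum_choose_succ_mul (R := ℝ) (fun i j => ((i : ℝ) - j) ^ 2) n
    have hchoose : ∑ i ∈ range (n + 1), (n.choose i : ℝ) = 2 ^ n := by
      exact_mod_cast Nat.sum_range_choose n
    calc ∑ i ∈ range (n + 1 + 1), ((n + 1).choose i : ℝ) * (2 * i - (n + 1 : ℕ)) ^ 2
        = ∑ i ∈ range (n + 2), ((n + 1).choose i : ℝ) * ((i : ℝ) - (n + 1 - i : ℕ)) ^ 2 :=
          sum_congr rfl fun i hi => by
            rw [Nat.cast_sub (Nat.lt_succ_iff.1 (mem_range.1 hi))]; push_cast; ring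
      _ = ∑ i ∈ range (n + 1), (n.choose i : ℝ) * (2 * (2 * i - n) ^ 2 + 2) := by
          rw [hsplit, ← sum_add_distrib]
          refine sum_congr rfl fun i hi => ?_
          have hi : i ≤ n := Nat.lt_succ_iff.1 (mem_range.1 hi)
          rw [Nat.cast_sub (by omega), Nat.cast_sub hi]; push_cast; ring
      _ = ((n + 1 : ℕ) : ℝ) * 2 ^ (n + 1) := by
          simp only [mul_add, sum_add_distrib, ← sum_mul, mul_left_comm _ (2 : ℝ), ← mul_sum, ih,
            hchoose]
          push_cast; ring

lemma sum_range_bin_half_mul_one_add_sq_div {n : ℕ} (hn : 0 < n) :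
    ∑ i ∈ range (n + 1), bin n (1 / 2) i * (1 + (2 * i - n) ^ 2 / n) = 2 := by
  have hvar := sum_range_choose_mul_two_mul_sub_sq n
  have hsum := sum_range_bin n (1 / 2)
  simp only [bin_half] at hsum ⊢
  simp only [mul_add, mul_one, sum_add_distrib, hsum]
  have hterm : ∀ i ∈ range (n + 1), (n.choose i : ℝ) / 2 ^ n * ((2 * i - n) ^ 2 / n)
      = (n.choose i : ℝ) * (2 * i - n) ^ 2 / (2 ^ n * n) := fun i _ => by
    field_simp
  rw [sum_congr rfl hterm, ← sum_div, hvar, mul_comm, div_self (by positivity)]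
  norm_num

lemma sum_range_le_of_antitoneOn {g : ℝ → ℝ} {B : ℝ} (hg : AntitoneOn g (Set.Ici 0))
    (hg0 : 0 ≤ g 0) (hB : ∀ L : ℕ, ∫ x in (0 : ℝ)..L, g x ≤ B) {L : ℕ} {x : ℕ → ℝ}
    (hx : ∀ j < L, (j : ℝ) ≤ x j) :
    ∑ j ∈ range L, g (x j) ≤ g 0 + B := by
  have hmono : ∑ j ∈ range L, g (x j) ≤ ∑ j ∈ range L, g j :=
    sum_le_sum fun j hj => hg (Set.mem_Ici.2 j.cast_nonneg)
      (Set.mem_Ici.2 (j.cast_nonneg.trans (hx j (mem_range.1 hj)))) (hx j (mem_range.1 hj))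
  refine hmono.trans ?_
  cases L with
  | zero => simpa using hg0.trans (le_add_of_nonneg_right (by simpa using hB 0))
  | succ L =>
    rw [sum_range_succ', Nat.cast_zero, add_comm]
    gcongr
    have := (hg.mono (Set.Icc_subset_Ici_self)).sum_le_integral (x₀ := 0) (a := L)
    simp only [zero_add] at this
    exact this.trans (hB L)

lemma sum_range_abs_sub_le_of_antitoneOn {g : ℝ → ℝ} {B : ℝ} (hg : AntitoneOn g (Set.Ici 0))
    (hg_nonneg : ∀ y, 0 ≤ y → 0 ≤ g y) (hB : ∀ L : ℕ, ∫ x in (0 : ℝ)..L, g x ≤ B)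
    (c : ℝ) (K : ℕ) :
    ∑ k ∈ range K, g |k - c| ≤ 2 * (g 0 + B) := by
  set N := ⌈c⌉₊
  have hg0 := hg_nonneg 0 le_rfl
  have hleft : ∑ k ∈ range N, g |k - c| ≤ g 0 + B := by
    rw [← sum_range_reflect]
    refine sum_range_le_of_antitoneOn hg hg0 hB fun j hj => ?_
    have hk : ((N - 1 - j : ℕ) : ℝ) < c := Nat.lt_ceil.1 (by omega)
    have hc : (N : ℝ) < c + 1 := Nat.ceil_lt_add_one ((Nat.cast_nonneg _).trans hk.le)
    rw [abs_of_neg (by linarith), Nat.cast_sub (by omega), Nat.cast_sub (by omega)]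
    push_cast
    linarith
  have hright : ∑ j ∈ range K, g |(N + j : ℕ) - c| ≤ g 0 + B := by
    refine sum_range_le_of_antitoneOn hg hg0 hB fun j _ => ?_
    have : c ≤ N := Nat.le_ceil c
    rw [abs_of_nonneg (by push_cast; linarith)]
    push_cast
    linarith
  calc ∑ k ∈ range K, g |k - c| ≤ ∑ k ∈ range (N + K), g |k - c| :=
        sum_le_sum_of_subset_of_nonneg (range_subset_range.2 (by omega))
          fun _ _ _ => hg_nonneg _ (abs_nonneg _)
    _ = ∑ k ∈ range N, g |k - c| + ∑ j ∈ range K, g |(N + j : ℕ) - c| := sum_range_add _ _ _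
    _ ≤ 2 * (g 0 + B) := by linarith

lemma antitoneOn_inv_one_add_div_sq (a : ℝ) :
    AntitoneOn (fun y : ℝ => (1 + (y / a) ^ 2)⁻¹) (Set.Ici 0) := by
  intro x hx y _ hxy
  have : (x / a) ^ 2 ≤ (y / a) ^ 2 := by
    rw [div_pow, div_pow]; gcongr
  dsimp only
  gcongr

lemma integral_inv_one_add_div_sq_le {a : ℝ} (ha : 0 < a) (L : ℝ) :
    ∫ x in (0 : ℝ)..L, (1 + (x / a) ^ 2)⁻¹ ≤ a * (π / 2) := by
  rw [intervalIntegral.integral_comp_div (fun x => (1 + x ^ 2)⁻¹) ha.ne', integral_inv_one_add_sq,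
    zero_div, arctan_zero, sub_zero, smul_eq_mul]
  exact mul_le_mul_of_nonneg_left (arctan_lt_pi_div_two _).le ha.le

lemma sq_sum_sqrt_le_sum_mul_sum_inv {ι : Type*} (s : Finset ι) {p w : ι → ℝ}
    (hp : ∀ i ∈ s, 0 ≤ p i) (hw : ∀ i ∈ s, 0 < w i) :
    (∑ i ∈ s, √(p i)) ^ 2 ≤ (∑ i ∈ s, p i * w i) * ∑ i ∈ s, (w i)⁻¹ :=
  sum_sq_le_sum_mul_sum_of_sq_le_mul s (fun i hi => mul_nonneg (hp i hi) (hw i hi).le)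
    (fun i hi => (inv_pos.2 (hw i hi)).le) fun i hi => by
      rw [sq_sqrt (hp i hi), mul_assoc, mul_inv_cancel₀ (hw i hi).ne', mul_one]

lemma sum_filter_mod_two_le (n r : ℕ) {f : ℕ → ℝ} (hf : ∀ i, 0 ≤ f i) :
    ∑ i ∈ (range (n + 1)).filter (· % 2 = r), f i ≤ ∑ k ∈ range (n / 2 + 1), f (2 * k + r) := by
  have hsub : (range (n + 1)).filter (· % 2 = r) ⊆ (range (n / 2 + 1)).image (2 * · + r) := by
    intro i hi
    simp only [mem_filter, mem_range] at hi
    exact mem_image.2 ⟨i / 2, mem_range.2 (by omega), by omega⟩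
  calc _ ≤ ∑ i ∈ (range (n / 2 + 1)).image (2 * · + r), f i :=
        sum_le_sum_of_subset_of_nonneg hsub fun i _ _ => hf i
    _ = _ := sum_image fun _ _ _ _ h => by omega

lemma sq_sum_sqrt_filter_mod_two_le (n r : ℕ) {p w : ℕ → ℝ} (hp : ∀ i, 0 ≤ p i)
    (hw : ∀ i, 0 < w i) :
    (∑ i ∈ (range (n + 1)).filter (· % 2 = r), √(p i)) ^ 2
      ≤ (∑ i ∈ range (n + 1), p i * w i) * ∑ k ∈ range (n / 2 + 1), (w (2 * k + r))⁻¹ :=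
  (sq_sum_sqrt_le_sum_mul_sum_inv _ (fun i _ => hp i) fun i _ => hw i).trans <|
    mul_le_mul (sum_le_sum_of_subset_of_nonneg (filter_subset _ _)
        fun i _ _ => mul_nonneg (hp i) (hw i).le)
      (sum_filter_mod_two_le n r fun i => (inv_pos.2 (hw i)).le)
      (sum_nonneg fun i _ => (inv_pos.2 (hw i)).le)
      (sum_nonneg fun i _ => mul_nonneg (hp i) (hw i).le)

lemma half_add_one_le_sqrt_two_pi_mul {x : ℝ} (h1 : 1 ≤ x) (h19 : x ≤ 19) :
    x / 2 + 1 ≤ √(2 * π * x) := by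
  rw [le_sqrt (by positivity) (by positivity)]
  nlinarith [pi_gt_three]

lemma four_add_pi_mul_sqrt_div_two_le_sqrt {x : ℝ} (h20 : 20 ≤ x) :
    4 + π * √x / 2 ≤ √(2 * π * x) := by
  have hs : (4.47 : ℝ) ≤ √x := le_sqrt_of_sq_le (by linarith)
  have hq : (2.5 : ℝ) ≤ √(2 * π) := le_sqrt_of_sq_le (by linarith [pi_gt_d2])
  have hpi : π * √x ≤ 3.1416 * √x := mul_le_mul_of_nonneg_right pi_lt_d4.le (sqrt_nonneg x)
  rw [sqrt_mul (by positivity)]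
  nlinarith [mul_le_mul_of_nonneg_right hq (sqrt_nonneg x)]

lemma sq_sum_sqrt_bin_half_filter_mod_two_le {n : ℕ} (hn : 0 < n) (r : ℕ) :
    (∑ i ∈ (range (n + 1)).filter (· % 2 = r), √(bin n (1 / 2) i)) ^ 2 ≤ √(2 * π * n) := by
  have hbin : ∀ i, 0 ≤ bin n (1 / 2) i := fun i => by rw [bin_half]; positivity
  rcases lt_or_ge n 20 with hsmall | hlarge
  · have hcs := sq_sum_sqrt_filter_mod_two_le n r hbin (w := fun _ => 1) fun _ => one_pos
    simp only [mul_one, sum_range_bin, inv_one, sum_const, card_range, nsmul_eq_mul, one_mul]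
      at hcs
    push_cast at hcs
    have hhalf : ((n / 2 : ℕ) : ℝ) ≤ n / 2 := Nat.cast_div_le
    have hnum := half_add_one_le_sqrt_two_pi_mul (x := n) (by exact_mod_cast hn)
      (by exact_mod_cast Nat.lt_succ_iff.1 hsmall)
    linarith
  · obtain ⟨a, ha_def⟩ : ∃ a : ℝ, a = √n / 4 := ⟨_, rfl⟩
    have ha : 0 < a := by rw [ha_def]; positivity
    have hcs := sq_sum_sqrt_filter_mod_two_le n r hbin
      (w := fun i => 1 + (2 * i - n) ^ 2 / n) fun _ => by positivity
    rw [sum_range_bin_half_mul_one_add_sq_div hn] at hcs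
    set c : ℝ := (n - 2 * r) / 4
    have hweight : ∀ k : ℕ, (1 + (2 * ((2 * k + r : ℕ) : ℝ) - n) ^ 2 / n)⁻¹
        = (1 + (|(k : ℝ) - c| / a) ^ 2)⁻¹ := fun k => by
      rw [ha_def, div_pow, sq_abs, div_pow, sq_sqrt (by positivity)]
      congr 1
      push_cast
      field_simp
      ring
    have hlattice := sum_range_abs_sub_le_of_antitoneOn (antitoneOn_inv_one_add_div_sq a)
      (fun _ _ => by positivity) (fun L => integral_inv_one_add_div_sq_le ha L) c (n / 2 + 1)
    rw [sum_congr rfl fun k _ => hweight k] at hcs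
    norm_num at hlattice
    have hnum := four_add_pi_mul_sqrt_div_two_le_sqrt (x := n) (by exact_mod_cast hlarge)
    have ha_pi : 2 * (1 + a * (π / 2)) = 2 + π * √n / 4 := by rw [ha_def]; ring
    linarith

lemma sum_sqrt_bin_half_filter_mod_two_le {n : ℕ} (hn : 0 < n) (r : ℕ) :
    ∑ i ∈ (range (n + 1)).filter (· % 2 = r), √(bin n (1 / 2) i) ≤ (2 * π * n) ^ ((1 : ℝ) / 4) := by
  rw [show (2 * π * n) ^ ((1 : ℝ) / 4) = √(√(2 * π * n)) by
    rw [sqrt_eq_rpow, sqrt_eq_rpow, ← rpow_mul (by positivity)]; norm_num]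
  exact (le_sqrt (sum_nonneg fun _ _ => sqrt_nonneg _) (sqrt_nonneg _)).2
    (sq_sum_sqrt_bin_half_filter_mod_two_le hn r)

lemma sqrt_add_sqrt_one_sub_le_exp_sqrt {s : ℝ} (hs : 0 ≤ s) : √s + √(1 - s) ≤ exp √s :=
  calc √s + √(1 - s) ≤ √s + 1 := by gcongr; exact sqrt_le_one.2 (by linarith)
    _ ≤ exp √s := by linarith [add_one_le_exp √s]

lemma sum_sqrt_prodP_le_exp {m : ℕ} {S : Fin m → ℝ} (hS : ∀ i, S i ∈ Set.Icc 0 1) :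
    ∑ x, √(prodP S x) ≤ exp (∑ i, √(S i)) :=
  calc ∑ x, √(prodP S x) = ∏ i, ∑ b : Bool, √(if b then S i else 1 - S i) := by
        rw [Fintype.prod_sum]
        exact sum_congr rfl fun x _ => sqrt_prod _ fun i _ => by
          split_ifs <;> linarith [(hS i).1, (hS i).2]
    _ = ∏ i, (√(S i) + √(1 - S i)) := by simp only [Fintype.sum_bool]; rfl
    _ ≤ ∏ i, exp √(S i) := prod_le_prod (fun _ _ => by positivity)
        fun i _ => sqrt_add_sqrt_one_sub_le_exp_sqrt (hS i).1
    _ = exp (∑ i, √(S i)) := (exp_sum _ _).symm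

lemma sum_sqrt_Se (n : ℕ) {α : ℝ} (hα : 0 ≤ α) :
    ∑ i, √(Se n α i) = √α * ∑ i ∈ (range (n + 1)).filter (· % 2 = 0), √(bin n (1 / 2) i) := by
  rw [sum_filter, mul_sum, ← Fin.sum_univ_eq_sum_range]
  refine sum_congr rfl fun i _ => ?_
  simp only [Se, Nat.even_iff]
  split_ifs <;> simp [sqrt_mul hα]

lemma sum_sqrt_So (n : ℕ) {α : ℝ} (hα : 0 ≤ α) :
    ∑ i, √(So n α i) = √α * ∑ i ∈ (range (n + 1)).filter (· % 2 = 1), √(bin n (1 / 2) i) := by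
  rw [sum_filter, mul_sum, ← Fin.sum_univ_eq_sum_range]
  refine sum_congr rfl fun i _ => ?_
  simp only [So, ← Nat.not_even_iff]
  split_ifs <;> simp [sqrt_mul hα]

/-- If `α bin(n,1/2,i) ≤ 1` for all `i`, then the sum over all `x ∈ {0,1}^{n+1}` of
the square roots of the probabilities of the product distribution induced by `S_e`
is at most `e^{√α (2πn)^{1/4}}`; by symmetry the same holds for `S_o`. -/
theorem sum_sqrt_prob_bound (n : ℕ) (hn : 0 < n) (α : ℝ) (hα : 0 < α)
    (hle : ∀ i : ℕ, i ≤ n → α * bin n (1/2) i ≤ 1) :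
    (∑ x : Fin (n+1) → Bool, Real.sqrt (prodP (Se n α) x))
        ≤ Real.exp (Real.sqrt α * (2 * Real.pi * n) ^ ((1:ℝ)/4)) ∧
    (∑ x : Fin (n+1) → Bool, Real.sqrt (prodP (So n α) x))
        ≤ Real.exp (Real.sqrt α * (2 * Real.pi * n) ^ ((1:ℝ)/4)) := by
  have hprob : ∀ i : Fin (n + 1), α * bin n (1 / 2) i ∈ Set.Icc 0 1 := fun i =>
    ⟨by rw [bin_half]; positivity, hle i (Nat.lt_succ_iff.1 i.isLt)⟩
  have hbound : ∀ (S : Fin (n + 1) → ℝ) (r : ℕ), (∀ i, S i ∈ Set.Icc 0 1) →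
      ∑ i, √(S i) = √α * ∑ i ∈ (range (n + 1)).filter (· % 2 = r), √(bin n (1 / 2) i) →
      ∑ x, √(prodP S x) ≤ exp (√α * (2 * π * n) ^ ((1 : ℝ) / 4)) := fun S r hS hsum =>
    (sum_sqrt_prodP_le_exp hS).trans <| exp_le_exp.2 <| hsum ▸
      mul_le_mul_of_nonneg_left (sum_sqrt_bin_half_filter_mod_two_le hn r) (sqrt_nonneg α)
  have hzero : (0 : ℝ) ∈ Set.Icc 0 1 := ⟨le_rfl, zero_le_one⟩
  refine ⟨hbound _ 0 (fun i => ?_) (sum_sqrt_Se n hα.le),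
    hbound _ 1 (fun i => ?_) (sum_sqrt_So n hα.le)⟩
  · unfold Se; split_ifs; exacts [hprob i, hzero]
  · unfold So; split_ifs; exacts [hzero, hprob i]
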